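/- arXiv:2305.01499 — 9 statements merged into one kernel-verified Lean document; each statement's English description precedes it below -/
import Mathlib

section
/- For any discrete group G and any p in [1,∞), the commutant of the image of the p-left regular representation equals the double commutant of the image of the p-right regular representation, i.e., λ(G)' = ρ(G)'' as sets of bounded operators on ℓ^p(G); consequently also ρ(G)' = λ(G)''. -/
/-!
An operator `T` commuting with all left translations is determined by `ξ = T δ₁` through
`T δ_g = λ_g ξ`, so it is right convolution by `ξ`; likewise an operator `S` commuting with
all right translations is left convolution by `η = S δ₁`. Then `T S δ_g = (η * δ_g) * ξ` and
`S T δ_g = η * (δ_g * ξ)` agree by reindexing a single sum, so `λ(G)'` and `ρ(G)'` commute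
elementwise. Together with `λ(G) ⊆ ρ(G)'` and `ρ(G) ⊆ λ(G)'` this gives both equalities.
-/

open scoped ENNReal

/-- The commutant of a set of bounded operators. -/
def commutant {E : Type*} [NormedAddCommGroup E] [NormedSpace ℂ E]
    (S : Set (E →L[ℂ] E)) : Set (E →L[ℂ] E) :=
  {T | ∀ A ∈ S, T.comp A = A.comp T}

section Commutant

variable {E : Type*} [NormedAddCommGroup E] [NormedSpace ℂ E]

theorem commutant_subset {S T : Set (E →L[ℂ] E)} (h : S ⊆ T) : commutant T ⊆ commutant S :=
  fun _ hA _ hB => hA _ (h hB)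

theorem commutant_eq_commutant_commutant {A B : Set (E →L[ℂ] E)} (hAB : A ⊆ commutant B)
    (hcomm : ∀ T ∈ commutant A, ∀ S ∈ commutant B, T.comp S = S.comp T) :
    commutant A = commutant (commutant B) :=
  Set.Subset.antisymm hcomm (commutant_subset hAB)

end Commutant

namespace lp

variable {𝕜 : Type*} [NormedField 𝕜] {α : Type*} [DecidableEq α] {p : ℝ≥0∞} [Fact (1 ≤ p)]

theorem ext_single_one {F : Type*} [NormedAddCommGroup F] [NormedSpace 𝕜 F] (hp : p ≠ ∞)
    {A B : lp (fun _ : α => 𝕜) p →L[𝕜] F}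
    (h : ∀ i, A (lp.single p i 1) = B (lp.single p i 1)) : A = B :=
  ext_continuousLinearMap hp fun i => ContinuousLinearMap.ext_ring (h i)

theorem hasSum_apply_apply (hp : p ≠ ∞) (A : lp (fun _ : α => 𝕜) p →L[𝕜] lp (fun _ : α => 𝕜) p)
    (f : lp (fun _ : α => 𝕜) p) (x : α) :
    HasSum (fun i => f i * A (lp.single p i 1) x) (A f x) := by
  have hsingle : ∀ i, lp.single p i (f i) = f i • (lp.single p i 1 : lp (fun _ : α => 𝕜) p) :=
    fun i => by rw [← lp.single_smul, smul_eq_mul, mul_one]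
  have heval : ∀ g : lp (fun _ : α => 𝕜) p, evalCLM 𝕜 _ p x g = g x := fun _ => rfl
  simpa [hsingle, heval] using (lp.hasSum_single hp f).mapL ((evalCLM 𝕜 _ p x).comp A)

theorem apply_eq_apply_symm_of_single_eq (hp : p ≠ ∞)
    {A : lp (fun _ : α => 𝕜) p →L[𝕜] lp (fun _ : α => 𝕜) p} (φ : α ≃ α)
    (hA : ∀ i, A (lp.single p i 1) = lp.single p (φ i) 1) (f : lp (fun _ : α => 𝕜) p) (x : α) :
    A f x = f (φ.symm x) := by
  refine (hasSum_apply_apply hp A f x).unique ?_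
  convert hasSum_single (φ.symm x) fun i hi => ?_ using 1
  · simp [hA]
  · rw [hA, lp.single_apply, Pi.single_apply, if_neg (by rintro rfl; simp at hi), mul_zero]

end lp

section RegularRepresentation

variable {G : Type*} [Group G] [DecidableEq G] {p : ℝ≥0∞} [Fact (1 ≤ p)]
  {lam rho : G → (lp (fun _ : G => ℂ) p →L[ℂ] lp (fun _ : G => ℂ) p)}

theorem left_regular_apply (hp : p ≠ ∞)
    (hlam : ∀ g h : G, lam g (lp.single p h 1) = lp.single p (g * h) 1)
    (g : G) (f : lp (fun _ : G => ℂ) p) (x : G) : lam g f x = f (g⁻¹ * x) :=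
  lp.apply_eq_apply_symm_of_single_eq hp (Equiv.mulLeft g) (hlam g) f x

theorem right_regular_apply (hp : p ≠ ∞)
    (hrho : ∀ g h : G, rho g (lp.single p h 1) = lp.single p (h * g⁻¹) 1)
    (g : G) (f : lp (fun _ : G => ℂ) p) (x : G) : rho g f x = f (x * g) := by
  simpa using lp.apply_eq_apply_symm_of_single_eq hp (Equiv.mulRight g⁻¹) (hrho g) f x

theorem left_regular_comp_right_regular (hp : p ≠ ∞)
    (hlam : ∀ g h : G, lam g (lp.single p h 1) = lp.single p (g * h) 1)
    (hrho : ∀ g h : G, rho g (lp.single p h 1) = lp.single p (h * g⁻¹) 1) (g h : G) :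
    (lam g).comp (rho h) = (rho h).comp (lam g) :=
  lp.ext_single_one hp fun k => by simp [hlam, hrho, mul_assoc]

theorem apply_single_of_mem_commutant_left
    (hlam : ∀ g h : G, lam g (lp.single p h 1) = lp.single p (g * h) 1)
    {T : lp (fun _ : G => ℂ) p →L[ℂ] lp (fun _ : G => ℂ) p} (hT : T ∈ commutant (Set.range lam))
    (g : G) : T (lp.single p g 1) = lam g (T (lp.single p 1 1)) := by
  simpa [hlam] using DFunLike.congr_fun (hT (lam g) ⟨g, rfl⟩) (lp.single p 1 1)

theorem apply_single_of_mem_commutant_right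
    (hrho : ∀ g h : G, rho g (lp.single p h 1) = lp.single p (h * g⁻¹) 1)
    {S : lp (fun _ : G => ℂ) p →L[ℂ] lp (fun _ : G => ℂ) p} (hS : S ∈ commutant (Set.range rho))
    (g : G) : S (lp.single p g 1) = rho g⁻¹ (S (lp.single p 1 1)) := by
  simpa [hrho] using DFunLike.congr_fun (hS (rho g⁻¹) ⟨g⁻¹, rfl⟩) (lp.single p 1 1)

theorem hasSum_of_mem_commutant_left (hp : p ≠ ∞)
    (hlam : ∀ g h : G, lam g (lp.single p h 1) = lp.single p (g * h) 1)
    {T : lp (fun _ : G => ℂ) p →L[ℂ] lp (fun _ : G => ℂ) p} (hT : T ∈ commutant (Set.range lam))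
    (f : lp (fun _ : G => ℂ) p) (x : G) :
    HasSum (fun h => f h * T (lp.single p 1 1) (h⁻¹ * x)) (T f x) := by
  have hsummand : (fun h => f h * T (lp.single p h 1) x)
      = fun h => f h * T (lp.single p 1 1) (h⁻¹ * x) := funext fun h => by
    rw [apply_single_of_mem_commutant_left hlam hT, left_regular_apply hp hlam]
  exact hsummand ▸ lp.hasSum_apply_apply hp T f x

theorem hasSum_of_mem_commutant_right (hp : p ≠ ∞)
    (hrho : ∀ g h : G, rho g (lp.single p h 1) = lp.single p (h * g⁻¹) 1)
    {S : lp (fun _ : G => ℂ) p →L[ℂ] lp (fun _ : G => ℂ) p} (hS : S ∈ commutant (Set.range rho))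
    (f : lp (fun _ : G => ℂ) p) (x : G) :
    HasSum (fun h => f h * S (lp.single p 1 1) (x * h⁻¹)) (S f x) := by
  have hsummand : (fun h => f h * S (lp.single p h 1) x)
      = fun h => f h * S (lp.single p 1 1) (x * h⁻¹) := funext fun h => by
    rw [apply_single_of_mem_commutant_right hrho hS, right_regular_apply hp hrho]
  exact hsummand ▸ lp.hasSum_apply_apply hp S f x

theorem commute_of_mem_commutant_left_of_mem_commutant_right (hp : p ≠ ∞)
    (hlam : ∀ g h : G, lam g (lp.single p h 1) = lp.single p (g * h) 1)
    (hrho : ∀ g h : G, rho g (lp.single p h 1) = lp.single p (h * g⁻¹) 1)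
    {T S : lp (fun _ : G => ℂ) p →L[ℂ] lp (fun _ : G => ℂ) p}
    (hT : T ∈ commutant (Set.range lam)) (hS : S ∈ commutant (Set.range rho)) :
    T.comp S = S.comp T := by
  refine lp.ext_single_one hp fun g => lp.ext <| funext fun x => ?_
  rw [T.comp_apply, S.comp_apply, apply_single_of_mem_commutant_right hrho hS,
    apply_single_of_mem_commutant_left hlam hT]
  have hTS := hasSum_of_mem_commutant_left hp hlam hT (rho g⁻¹ (S (lp.single p 1 1))) x
  have hST := hasSum_of_mem_commutant_right hp hrho hS (lam g (T (lp.single p 1 1))) x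
  simp only [right_regular_apply hp hrho, left_regular_apply hp hlam] at hTS hST
  -- reindexing by `h ↦ x h⁻¹ g` turns one convolution sum into the other
  let e : G ≃ G := ((Equiv.inv G).trans (Equiv.mulLeft x)).trans (Equiv.mulRight g)
  refine HasSum.unique ?_ hST
  convert e.hasSum_iff.mpr hTS using 1
  funext h
  simp [e, mul_assoc, mul_comm]

end RegularRepresentation

theorem commutant_left_regular_eq_double_commutant_right_regular_general
    (G : Type*) [Group G] [DecidableEq G]
    (p : ℝ≥0∞) [Fact (1 ≤ p)] (hp : p ≠ ∞)
    (lam rho : G → (lp (fun _ : G => ℂ) p →L[ℂ] lp (fun _ : G => ℂ) p))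
    (hlam : ∀ g h : G, lam g (lp.single p h 1) = lp.single p (g * h) 1)
    (hrho : ∀ g h : G, rho g (lp.single p h 1) = lp.single p (h * g⁻¹) 1) :
    commutant (Set.range lam) = commutant (commutant (Set.range rho)) ∧
      commutant (Set.range rho) = commutant (commutant (Set.range lam)) := by
  have hlam_rho : Set.range lam ⊆ commutant (Set.range rho) := by
    rintro _ ⟨g, rfl⟩ _ ⟨h, rfl⟩
    exact left_regular_comp_right_regular hp hlam hrho g h
  have hrho_lam : Set.range rho ⊆ commutant (Set.range lam) := by
    rintro _ ⟨h, rfl⟩ _ ⟨g, rfl⟩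
    exact (left_regular_comp_right_regular hp hlam hrho g h).symm
  exact ⟨commutant_eq_commutant_commutant hlam_rho fun T hT S hS =>
      commute_of_mem_commutant_left_of_mem_commutant_right hp hlam hrho hT hS,
    commutant_eq_commutant_commutant hrho_lam fun S hS T hT =>
      (commute_of_mem_commutant_left_of_mem_commutant_right hp hlam hrho hT hS).symm⟩

/-- `λ(G)' = ρ(G)''` and `ρ(G)' = λ(G)''` for the p-left and p-right regular
representations of a discrete group `G` on `ℓ^p(G)`. -/
theorem commutant_left_regular_eq_double_commutant_right_regular
    (G : Type*) [Group G] [Countable G] [DecidableEq G]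
    (p : ℝ≥0∞) [Fact (1 ≤ p)] (hp : p ≠ ∞)
    (lam rho : G → (lp (fun _ : G => ℂ) p →L[ℂ] lp (fun _ : G => ℂ) p))
    (hlam : ∀ g h : G, lam g (lp.single p h 1) = lp.single p (g * h) 1)
    (hrho : ∀ g h : G, rho g (lp.single p h 1) = lp.single p (h * g⁻¹) 1) :
    commutant (Set.range lam) = commutant (commutant (Set.range rho)) ∧
      commutant (Set.range rho) = commutant (commutant (Set.range lam)) :=
  commutant_left_regular_eq_double_commutant_right_regular_general G p hp lam rho hlam hrho
end

section
/- Every group-p-USF representation π of a discrete group G on a Banach space X is invertibly isometrically equivalent to a subrepresentation of the p-left regular representation λ of G, namely to g ↦ λ_g restricted to θ_f(X); the intertwining invertible isometry is θ_f: X → θ_f(X). -/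
open scoped ENNReal

/-! The analysis operator turns `π_g` into left translation: the `(g k)`-th coefficient of
`π_g x` is `f₀ (π_k⁻¹ x)`, the `k`-th coefficient of `x`. Since `λ_g` sends `e_k` to `e_{g k}`
and the finitely supported sequences are dense in `ℓ^p` (`p < ∞`), `λ_g θ_f x = θ_f (π_g x)`. -/

namespace lp

variable {ι 𝕜 : Type*} [DecidableEq ι] [NormedField 𝕜] {p : ℝ≥0∞}

theorem single_eq_smul_single_one (i : ι) (c : 𝕜) :
    lp.single p i c = c • (lp.single p i 1 : lp (fun _ : ι => 𝕜) p) := by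
  rw [← lp.single_smul, smul_eq_mul, mul_one]

theorem map_eq_of_map_single_eq_single [Fact (1 ≤ p)] (hp : p ≠ ∞) (e : ι ≃ ι)
    (L : lp (fun _ : ι => 𝕜) p →L[𝕜] lp (fun _ : ι => 𝕜) p)
    (hL : ∀ i, L (lp.single p i 1) = lp.single p (e i) 1)
    {a b : lp (fun _ : ι => 𝕜) p} (hab : ∀ i, b (e i) = a i) : L a = b := by
  have hLa : HasSum (fun i => a i • (lp.single p (e i) 1 : lp (fun _ : ι => 𝕜) p)) (L a) := by
    refine (L.hasSum (lp.hasSum_single hp a)).congr_fun fun i => ?_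
    rw [single_eq_smul_single_one i (a i), map_smul, hL]
  have hb : HasSum (fun i => a i • (lp.single p (e i) 1 : lp (fun _ : ι => 𝕜) p)) b := by
    refine (e.hasSum_iff.mpr (lp.hasSum_single hp b)).congr_fun fun i => ?_
    rw [Function.comp_apply, hab]
    exact (single_eq_smul_single_one _ _).symm
  exact hLa.unique hb

end lp

theorem apply_mul_inv_apply_eq_of_map_mul {G 𝕜 X : Type*} [Group G] [NormedField 𝕜]
    [SeminormedAddCommGroup X] [NormedSpace 𝕜 X] (π : G → (X ≃ₗᵢ[𝕜] X))
    (hπ : ∀ g h : G, ∀ x : X, π (g * h) x = π g (π h x)) (g k : G) (x : X) :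
    π (g * k)⁻¹ (π g x) = π k⁻¹ x := by
  let ρ : G →* (X ≃ₗᵢ[𝕜] X) := MonoidHom.mk' π fun g h => LinearIsometryEquiv.ext (hπ g h)
  change (ρ (g * k)⁻¹ * ρ g) x = ρ k⁻¹ x
  rw [← map_mul, mul_inv_rev, inv_mul_cancel_right]

theorem groupPUSF_representation_equivalent_to_subrepresentation_of_left_regular_general
    (G : Type*) [Group G] [DecidableEq G]
    (p : ℝ≥0∞) [Fact (1 ≤ p)] (hp : p ≠ ∞)
    {X : Type*} [NormedAddCommGroup X] [NormedSpace ℂ X]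
    (f : G → (X →L[ℂ] ℂ))
    (θf : X →L[ℂ] lp (fun _ : G => ℂ) p)
    (hθf : ∀ (x : X) (g : G), θf x g = f g x)
    (hiso : ∀ x, ‖θf x‖ = ‖x‖)
    (π : G → (X ≃ₗᵢ[ℂ] X))
    (hπ : ∀ g h : G, ∀ x : X, π (g * h) x = π g (π h x))
    (f₀ : X →L[ℂ] ℂ)
    (hf : ∀ (g : G) (x : X), f g x = f₀ (π g⁻¹ x))
    (lam : G → (lp (fun _ : G => ℂ) p →L[ℂ] lp (fun _ : G => ℂ) p))
    (hlam : ∀ g h : G, lam g (lp.single p h 1) = lp.single p (g * h) 1) :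
    (∀ g : G, Set.MapsTo (lam g) (Set.range ⇑θf) (Set.range ⇑θf)) ∧
    (∀ (g : G) (x : X), lam g (θf x) = θf (π g x)) ∧
    Function.Injective ⇑θf ∧
    (∀ x, ‖θf x‖ = ‖x‖) := by
  have intertwine : ∀ (g : G) (x : X), lam g (θf x) = θf (π g x) := fun g x =>
    lp.map_eq_of_map_single_eq_single hp (Equiv.mulLeft g) (lam g) (hlam g) fun k => by
      rw [Equiv.coe_mulLeft, hθf, hθf, hf, hf, apply_mul_inv_apply_eq_of_map_mul π hπ]
  refine ⟨?_, intertwine, (AddMonoidHomClass.isometry_of_norm θf hiso).injective, hiso⟩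
  rintro g _ ⟨x, rfl⟩
  exact ⟨π g x, (intertwine g x).symm⟩

/-- Every group-p-USF representation is invertibly isometrically equivalent (via the
analysis operator `θ_f`) to the subrepresentation of the p-left regular
representation on `θ_f(X)`. -/
theorem groupPUSF_representation_equivalent_to_subrepresentation_of_left_regular
    (G : Type*) [Group G] [Countable G] [DecidableEq G]
    (p : ℝ≥0∞) [Fact (1 ≤ p)] (hp : p ≠ ∞)
    {X : Type*} [NormedAddCommGroup X] [NormedSpace ℂ X] [CompleteSpace X]
    (f : G → (X →L[ℂ] ℂ)) (τ : G → X)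
    (hrec : ∀ x : X, HasSum (fun g => f g x • τ g) x)
    (θf : X →L[ℂ] lp (fun _ : G => ℂ) p)
    (hθf : ∀ (x : X) (g : G), θf x g = f g x)
    (hiso : ∀ x, ‖θf x‖ = ‖x‖)
    (θτ : lp (fun _ : G => ℂ) p →L[ℂ] X)
    (hθτ : ∀ a : lp (fun _ : G => ℂ) p, HasSum (fun g => a g • τ g) (θτ a))
    (π : G → (X ≃ₗᵢ[ℂ] X))
    (hπ : ∀ g h : G, ∀ x : X, π (g * h) x = π g (π h x))
    (f₀ : X →L[ℂ] ℂ) (τ₀ : X)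
    (hf : ∀ (g : G) (x : X), f g x = f₀ (π g⁻¹ x))
    (hτ : ∀ g : G, τ g = π g τ₀)
    (lam : G → (lp (fun _ : G => ℂ) p →L[ℂ] lp (fun _ : G => ℂ) p))
    (hlam : ∀ g h : G, lam g (lp.single p h 1) = lp.single p (g * h) 1) :
    (∀ g : G, Set.MapsTo (lam g) (Set.range ⇑θf) (Set.range ⇑θf)) ∧
    (∀ (g : G) (x : X), lam g (θf x) = θf (π g x)) ∧
    Function.Injective ⇑θf ∧
    (∀ x, ‖θf x‖ = ‖x‖) :=
  groupPUSF_representation_equivalent_to_subrepresentation_of_left_regular_general G p hp f θf hθf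
    hiso π hπ f₀ hf lam hlam
end

section
/- Let ({f_g}, {τ_g}) be a p-USF for a Banach space X whose Gramian is a group-matrix, i.e., f_{ug}(τ_{uh}) = f_g(τ_h) for all u, g, h ∈ G. Then for each g ∈ G the operator π_g x := Σ_{h∈G} f_h(x) τ_{gh} is a well-defined invertible isometry of X, g ↦ π_g is a group homomorphism, and τ_g = π_g τ_e, f_g = f_e π_{g^{-1}} for all g ∈ G; that is, ({f_g}, {τ_g}) is a group-p-USF. -/
open scoped ENNReal

/-- If the Gramian of a p-USF is a group-matrix, i.e. `f_{ug}(τ_{uh}) = f_g(τ_h)`,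
then `π_g x = Σ_h f_h(x) τ_{gh}` defines an invertible isometric representation of
`G` on `X` with `τ_g = π_g τ_e` and `f_g = f_e π_{g⁻¹}`; i.e. it is a group-p-USF. -/
theorem pUSF_group_matrix_gramian_gives_group_pUSF
    (G : Type*) [Group G] [Countable G] [DecidableEq G]
    (p : ℝ≥0∞) [Fact (1 ≤ p)] (hp : p ≠ ∞)
    {X : Type*} [NormedAddCommGroup X] [NormedSpace ℂ X] [CompleteSpace X]
    (f : G → (X →L[ℂ] ℂ)) (τ : G → X)
    (hrec : ∀ x : X, HasSum (fun g => f g x • τ g) x)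
    (θf : X →L[ℂ] lp (fun _ : G => ℂ) p)
    (hθf : ∀ (x : X) (g : G), θf x g = f g x)
    (hiso : ∀ x, ‖θf x‖ = ‖x‖)
    (θτ : lp (fun _ : G => ℂ) p →L[ℂ] X)
    (hθτ : ∀ a : lp (fun _ : G => ℂ) p, HasSum (fun g => a g • τ g) (θτ a))
    (hgram : ∀ u g h : G, f (u * g) (τ (u * h)) = f g (τ h)) :
    ∃ π : G → (X ≃ₗᵢ[ℂ] X),
      (∀ g h : G, ∀ x : X, π (g * h) x = π g (π h x)) ∧
      (∀ (g : G) (x : X), HasSum (fun h => f h x • τ (g * h)) (π g x)) ∧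
      (∀ g : G, τ g = π g (τ 1)) ∧
      (∀ (g : G) (x : X), f g x = f 1 (π g⁻¹ x)) := by
  have hp1 : (1 : ℝ≥0∞) ≤ p := Fact.out
  have hpR : 0 < p.toReal := by
    apply ENNReal.toReal_pos (by intro h; rw [h] at hp1; simp at hp1) hp
  -- the shifted sequence is in lp
  have hmem : ∀ (g : G) (a : lp (fun _ : G => ℂ) p),
      Memℓp (fun k => a (g⁻¹ * k)) p := by
    intro g a
    rw [memℓp_gen_iff hpR]
    have ha := (memℓp_gen_iff hpR).mp (lp.memℓp a)
    have := (Equiv.mulLeft g⁻¹).summable_iff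
      (f := fun k => ‖a k‖ ^ p.toReal)
    exact this.mpr ha
  -- the shift as an element of lp
  set T : G → lp (fun _ : G => ℂ) p → lp (fun _ : G => ℂ) p :=
    fun g a => ⟨fun k => a (g⁻¹ * k), hmem g a⟩ with hT
  have hTapp : ∀ g a k, T g a k = a (g⁻¹ * k) := fun g a k => rfl
  -- the candidate map
  set P : G → X → X := fun g x => θτ (T g (θf x)) with hP
  -- key: HasSum statement
  have hsum : ∀ (g : G) (x : X), HasSum (fun h => f h x • τ (g * h)) (P g x) := by
    intro g x
    have h1 := hθτ (T g (θf x))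
    have h2 := (Equiv.mulLeft g).hasSum_iff.mpr h1
    simp only [Equiv.coe_mulLeft, Function.comp_def] at h2
    have h3 : (fun h : G => f h x • τ (g * h))
        = fun h : G => (T g (θf x) : ∀ _ : G, ℂ) (g * h) • τ (g * h) := by
      funext h; rw [hTapp, inv_mul_cancel_left, hθf]
    rw [h3]; exact h2
  -- key: coefficients of P g x
  have hcoef : ∀ (g : G) (x : X) (k : G), f k (P g x) = f (g⁻¹ * k) x := by
    intro g x k
    have h1 := ((f k).hasSum (hsum g x))
    have h2 : ∀ h : G, f k (f h x • τ (g * h)) = f h x • f (g⁻¹ * k) (τ h) := by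
      intro h
      rw [map_smul]
      congr 1
      have := hgram g (g⁻¹ * k) h
      rw [mul_inv_cancel_left] at this
      exact this
    simp only [h2] at h1
    have h3 := ((f (g⁻¹ * k)).hasSum (hrec x))
    simp only [map_smul] at h3
    exact h1.unique h3
  have hθfP : ∀ (g : G) (x : X), θf (P g x) = T g (θf x) := by
    intro g x
    apply lp.ext
    funext k
    rw [hθf, hTapp, hθf, hcoef]
  -- injectivity of θf
  have hinj : Function.Injective (θf : X → lp (fun _ : G => ℂ) p) := by
    intro x y hxy
    have : ‖x - y‖ = 0 := by rw [← hiso, map_sub, hxy, sub_self, norm_zero]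
    exact sub_eq_zero.mp (norm_eq_zero.mp this)
  -- norm invariance of T
  have hTnorm : ∀ g a, ‖T g a‖ = ‖a‖ := by
    intro g a
    rw [lp.norm_eq_tsum_rpow hpR, lp.norm_eq_tsum_rpow hpR]
    congr 1
    have := (Equiv.mulLeft g⁻¹).tsum_eq (f := fun k => ‖a k‖ ^ p.toReal)
    simpa [Function.comp, hTapp] using this
  have hPnorm : ∀ g x, ‖P g x‖ = ‖x‖ := by
    intro g x
    rw [← hiso (P g x), hθfP, hTnorm, hiso]
  -- P is multiplicative
  have hPmul : ∀ g h x, P (g * h) x = P g (P h x) := by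
    intro g h x
    apply hinj
    rw [hθfP]
    apply lp.ext
    funext k
    rw [hTapp, hθf, hθf, hcoef, hcoef, mul_inv_rev, mul_assoc]
  have hPone : ∀ x, P 1 x = x := by
    intro x
    apply hinj
    apply lp.ext
    funext k
    rw [hθf, hθf, hcoef, inv_one, one_mul]
  have hPadd : ∀ g x y, P g (x + y) = P g x + P g y := by
    intro g x y
    apply hinj
    apply lp.ext
    funext k
    rw [hθf, hcoef, map_add]
    have : (θf (P g x + P g y)) k = θf (P g x) k + θf (P g y) k := by
      rw [map_add]; rfl
    rw [this, hθf, hθf, hcoef, hcoef]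
  have hPsmul : ∀ (g : G) (c : ℂ) (x : X), P g (c • x) = c • P g x := by
    intro g c x
    apply hinj
    apply lp.ext
    funext k
    rw [hθf, hcoef, map_smul]
    have : (θf (c • P g x)) k = c • θf (P g x) k := by
      rw [map_smul]; rfl
    rw [this, hθf, hcoef]
  -- build the isometric equivalences
  refine ⟨fun g =>
    { toFun := P g
      invFun := P g⁻¹
      map_add' := hPadd g
      map_smul' := hPsmul g
      left_inv := fun x => by show P g⁻¹ (P g x) = x; rw [← hPmul, inv_mul_cancel, hPone]
      right_inv := fun x => by show P g (P g⁻¹ x) = x; rw [← hPmul, mul_inv_cancel, hPone]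
      norm_map' := hPnorm g }, ?_, ?_, ?_, ?_⟩
  · intro g h x; exact hPmul g h x
  · intro g x; exact hsum g x
  · intro g
    apply hinj
    apply lp.ext
    funext k
    show θf (τ g) k = θf (P g (τ 1)) k
    rw [hθf, hθf, hcoef]
    have := hgram g⁻¹ k g
    rw [inv_mul_cancel] at this
    exact this.symm
  · intro g x
    show f g x = f 1 (P g⁻¹ x)
    rw [hcoef, inv_inv, mul_one]
end

section
/- Let ({f_g}, {τ_g}) be a p-USF for a Banach space X. There exists an invertible isometric representation π of G on X with τ_g = π_g τ_e and f_g = f_e π_{g^{-1}} for all g, if and only if f_{ug}(τ_{uh}) = f_g(τ_h) for all u, g, h ∈ G. Moreover, in that case π can be defined by π_g = θ_τ λ_g θ_f. -/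
open scoped ENNReal

/-- A p-USF is a group-p-USF (for some invertible isometric representation `π` with
`τ_g = π_g τ_e`, `f_g = f_e π_{g⁻¹}`) iff `f_{ug}(τ_{uh}) = f_g(τ_h)` for all
`u, g, h`; moreover `π` can then be defined by `π_g = θ_τ λ_g θ_f`. -/
theorem pUSF_group_iff_gramian_condition
    (G : Type*) [Group G] [Countable G] [DecidableEq G]
    (p : ℝ≥0∞) [Fact (1 ≤ p)] (hp : p ≠ ∞)
    {X : Type*} [NormedAddCommGroup X] [NormedSpace ℂ X] [CompleteSpace X]
    (f : G → (X →L[ℂ] ℂ)) (τ : G → X)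
    (hrec : ∀ x : X, HasSum (fun g => f g x • τ g) x)
    (θf : X →L[ℂ] lp (fun _ : G => ℂ) p)
    (hθf : ∀ (x : X) (g : G), θf x g = f g x)
    (hiso : ∀ x, ‖θf x‖ = ‖x‖)
    (θτ : lp (fun _ : G => ℂ) p →L[ℂ] X)
    (hθτ : ∀ a : lp (fun _ : G => ℂ) p, HasSum (fun g => a g • τ g) (θτ a))
    (lam : G → (lp (fun _ : G => ℂ) p →L[ℂ] lp (fun _ : G => ℂ) p))
    (hlam : ∀ g h : G, lam g (lp.single p h 1) = lp.single p (g * h) 1) :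
    (∃ π : G → (X ≃ₗᵢ[ℂ] X),
        (∀ g h : G, ∀ x : X, π (g * h) x = π g (π h x)) ∧
        (∀ g : G, τ g = π g (τ 1)) ∧
        (∀ (g : G) (x : X), f g x = f 1 (π g⁻¹ x)) ∧
        (∀ (g : G) (x : X), π g x = θτ (lam g (θf x)))) ↔
      (∀ u g h : G, f (u * g) (τ (u * h)) = f g (τ h)) := by
  have hp0 : 0 < p.toReal :=
    ENNReal.toReal_pos (lt_of_lt_of_le zero_lt_one Fact.out).ne' hp
  constructor
  · rintro ⟨π, hmul, hτ, hf, -⟩ u g h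
    rw [hτ (u * h), hf (u * g), ← hmul, hτ h, hf g, ← hmul]
    have : (u * g)⁻¹ * (u * h) = g⁻¹ * h := by group
    rw [this]
  · intro hgram
    -- injectivity of the analysis operator
    have hinj : ∀ x y : X, (∀ g : G, f g x = f g y) → x = y := by
      intro x y hxy
      have h0 : θf x = θf y := by
        apply lp.ext
        funext g
        show θf x g = θf y g
        rw [hθf, hθf, hxy g]
      have h1 := hiso (x - y)
      rw [map_sub, h0, sub_self, norm_zero] at h1
      exact sub_eq_zero.mp (norm_eq_zero.mp h1.symm)
    -- synthesis of a single basis vector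
    have key1 : ∀ h : G, θτ (lp.single p h (1 : ℂ)) = τ h := by
      intro h
      refine (hθτ (lp.single p h (1 : ℂ))).unique ?_
      have hfun : (fun g => (lp.single p h (1 : ℂ) : lp (fun _ : G => ℂ) p) g • τ g)
          = fun g => if g = h then τ h else 0 := by
        funext g
        by_cases hg : g = h
        · subst hg; simp [lp.single_apply_self]
        · simp [lp.single_apply_ne p h _ hg, hg]
      rw [hfun]
      exact hasSum_ite_eq h (τ h)
    -- expansion of θf x in terms of basis vectors
    have key2 : ∀ x : X, HasSum (fun k : G => f k x • lp.single p k (1 : ℂ)) (θf x) := by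
      intro x
      have h2 := lp.hasSum_single hp (θf x)
      refine h2.congr_fun fun k => ?_
      rw [hθf, ← lp.single_smul, smul_eq_mul, mul_one]
    -- formula for T g x as a sum
    have key4 : ∀ (g : G) (x : X),
        HasSum (fun k : G => f k x • τ (g * k)) (θτ (lam g (θf x))) := by
      intro g x
      have h3 : HasSum (fun k : G => f k x • lp.single p (g * k) (1 : ℂ))
          (lam g (θf x)) := by
        refine ((lam g).hasSum (key2 x)).congr_fun fun k => ?_
        rw [map_smul, hlam]
      refine (θτ.hasSum h3).congr_fun fun k => ?_
      rw [map_smul, key1]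
    -- main coordinate identity
    have keyF : ∀ (g h : G) (x : X), f h (θτ (lam g (θf x))) = f (g⁻¹ * h) x := by
      intro g h x
      have h5 : HasSum (fun k : G => f k x • f (g⁻¹ * h) (τ k))
          (f h (θτ (lam g (θf x)))) := by
        refine ((f h).hasSum (key4 g x)).congr_fun fun k => ?_
        rw [map_smul]
        congr 1
        have := hgram g (g⁻¹ * h) k
        rw [show g * (g⁻¹ * h) = h by group] at this
        exact this.symm
      have h6 : HasSum (fun k : G => f k x • f (g⁻¹ * h) (τ k)) (f (g⁻¹ * h) x) := by
        refine ((f (g⁻¹ * h)).hasSum (hrec x)).congr_fun fun k => ?_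
        rw [map_smul]
      exact h5.unique h6
    set T : G → (X →L[ℂ] X) := fun g => θτ.comp ((lam g).comp θf) with hT
    have hTapp : ∀ (g : G) (x : X), T g x = θτ (lam g (θf x)) := fun g x => rfl
    have keyT : ∀ (g h : G) (x : X), f h (T g x) = f (g⁻¹ * h) x := fun g h x =>
      keyF g h x
    have hT1 : ∀ x : X, T 1 x = x := by
      intro x
      refine hinj _ _ fun k => ?_
      rw [keyT]
      simp
    have hTmul : ∀ (g h : G) (x : X), T (g * h) x = T g (T h x) := by
      intro g h x
      refine hinj _ _ fun k => ?_
      rw [keyT, keyT, keyT]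
      congr 1
      group
    have hTinv : ∀ (g : G) (x : X), T g (T g⁻¹ x) = x := by
      intro g x
      rw [← hTmul, mul_inv_cancel, hT1]
    have hTinv' : ∀ (g : G) (x : X), T g⁻¹ (T g x) = x := by
      intro g x
      rw [← hTmul, inv_mul_cancel, hT1]
    have hTnorm : ∀ (g : G) (x : X), ‖T g x‖ = ‖x‖ := by
      intro g x
      rw [← hiso (T g x), ← hiso x, lp.norm_eq_tsum_rpow hp0, lp.norm_eq_tsum_rpow hp0]
      congr 1
      have h7 : ∀ h : G, ‖θf (T g x) h‖ ^ p.toReal = ‖θf x ((Equiv.mulLeft g⁻¹) h)‖ ^ p.toReal := by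
        intro h
        rw [hθf, keyT, hθf]
        rfl
      rw [tsum_congr h7]
      exact (Equiv.mulLeft g⁻¹).tsum_eq fun k => ‖θf x k‖ ^ p.toReal
    refine ⟨fun g =>
      { toLinearEquiv := LinearEquiv.ofLinear (T g : X →ₗ[ℂ] X) (T g⁻¹ : X →ₗ[ℂ] X)
          (by ext x; exact hTinv g x) (by ext x; exact hTinv' g x)
        norm_map' := hTnorm g }, ?_, ?_, ?_, ?_⟩
    · intro g h x
      exact hTmul g h x
    · intro g
      refine hinj _ _ fun k => ?_
      show f k (τ g) = f k (T g (τ 1))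
      rw [keyT]
      have := hgram g (g⁻¹ * k) 1
      rw [show g * (g⁻¹ * k) = k by group, mul_one] at this
      exact this
    · intro g x
      show f g x = f 1 (T g⁻¹ x)
      rw [keyT]
      simp
    · intro g x
      rfl
end

section
/- Schauder-Moyal formula: for any linear functional f on ℂ^{o(G)} and any vector τ ∈ ℂ^{o(G)}, V_τ W_f = o(G) f(τ) · I, where W_f x = (f(π(λ)^{-1} x))_{λ ∈ G×Ĝ} and V_τ (a_λ) = Σ_{λ∈G×Ĝ} a_λ π(λ) τ. Equivalently, Σ_{λ∈G×Ĝ} f(π(λ)^{-1}x) π(λ)τ = o(G) f(τ) x for all x. -/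
open scoped Classical

/-- The phase space `G × Ĝ` of a finite abelian group `G`, written additively. -/
abbrev PhaseSpace (G : Type*) [AddCommGroup G] := G × Additive (AddChar G ℂ)

/-- Time-frequency shift `π(k, ξ) = M_ξ T_k` on `ℂ^{o(G)}`:
`(π(k,ξ) x)(g) = ξ(g) * x(g - k)`. -/
noncomputable def TF {G : Type*} [AddCommGroup G] (μ : PhaseSpace G) :
    (G → ℂ) ≃ₗ[ℂ] (G → ℂ) where
  toFun x g := (Additive.toMul μ.2) g * x (g - μ.1)
  invFun y g := (Additive.toMul μ.2) (-(g + μ.1)) * y (g + μ.1)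
  map_add' x y := by funext g; simp [mul_add]
  map_smul' c x := by funext g; simp [smul_eq_mul]; ring
  left_inv x := by
    funext g
    simp only
    rw [add_sub_cancel_right, ← mul_assoc, ← AddChar.map_add_eq_mul, neg_add_cancel,
      AddChar.map_zero_eq_one, one_mul]
  right_inv y := by
    funext g
    simp only
    rw [sub_add_cancel, ← mul_assoc, ← AddChar.map_add_eq_mul, add_neg_cancel,
      AddChar.map_zero_eq_one, one_mul]

lemma TF_apply {G : Type*} [AddCommGroup G] (μ : PhaseSpace G) (τ : G → ℂ) (g : G) :
    TF μ τ g = (Additive.toMul μ.2) g * τ (g - μ.1) := rfl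

lemma TF_symm_apply {G : Type*} [AddCommGroup G] (μ : PhaseSpace G) (x : G → ℂ) (g : G) :
    (TF μ).symm x g = (Additive.toMul μ.2) (-(g + μ.1)) * x (g + μ.1) := rfl

lemma lin_eq_sum {G : Type*} [AddCommGroup G] [Fintype G]
    (f : (G → ℂ) →ₗ[ℂ] ℂ) (v : G → ℂ) :
    f v = ∑ h : G, v h * f (Pi.single h 1) := by
  conv_lhs => rw [← Finset.univ_sum_single v]
  rw [map_sum]
  refine Finset.sum_congr rfl fun h _ => ?_
  rw [show Pi.single h (v h) = v h • (Pi.single h 1 : G → ℂ) by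
    rw [← Pi.single_smul, smul_eq_mul, mul_one], map_smul, smul_eq_mul]

/-- Schauder–Moyal formula: `V_τ W_f = o(G) f(τ) I`, i.e.
`Σ_{λ ∈ G×Ĝ} f(π(λ)⁻¹ x) π(λ)τ = o(G) f(τ) x` for all `x`. -/
theorem schauder_moyal_formula
    (G : Type*) [AddCommGroup G] [Fintype G]
    (f : (G → ℂ) →ₗ[ℂ] ℂ) (τ : G → ℂ) :
    ∀ x : G → ℂ,
      ∑ μ : PhaseSpace G, f ((TF μ).symm x) • TF μ τ
        = ((Fintype.card G : ℂ) * f τ) • x := by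
  intro x
  funext g
  rw [Finset.sum_apply]
  rw [Fintype.sum_prod_type]
  have key : ∀ k : G,
      ∑ ξ : Additive (AddChar G ℂ), (f ((TF (k, ξ)).symm x) • TF (k, ξ) τ) g
        = (Fintype.card G : ℂ) * (x g * ((τ (g - k)) * f (Pi.single (g - k) 1))) := by
    intro k
    have : ∀ ξ : Additive (AddChar G ℂ),
        (f ((TF (k, ξ)).symm x) • TF (k, ξ) τ) g
          = ∑ h : G, (x (h + k) * f (Pi.single h 1) * τ (g - k))
              * (Additive.toMul ξ) (g - (h + k)) := by
      intro ξ
      rw [Pi.smul_apply, smul_eq_mul, TF_apply, lin_eq_sum f, Finset.sum_mul]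
      refine Finset.sum_congr rfl fun h _ => ?_
      rw [TF_symm_apply]
      have : (Additive.toMul ξ) (g - (h + k))
          = (Additive.toMul ξ) (-(h + k)) * (Additive.toMul ξ) g := by
        rw [← AddChar.map_add_eq_mul, sub_eq_neg_add]
      rw [this]; ring
    simp_rw [this]
    rw [Finset.sum_comm]
    have orth : ∀ h : G, ∑ ξ : Additive (AddChar G ℂ),
        (x (h + k) * f (Pi.single h 1) * τ (g - k)) * (Additive.toMul ξ) (g - (h + k))
          = (x (h + k) * f (Pi.single h 1) * τ (g - k))
              * (if g - (h + k) = 0 then (Fintype.card G : ℂ) else 0) := by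
      intro h
      rw [← Finset.mul_sum]
      congr 1
      rw [← AddChar.sum_apply_eq_ite]
      exact Fintype.sum_equiv (Additive.toMul (α := AddChar G ℂ)) _ _ fun ξ => rfl
    simp_rw [orth, mul_ite, mul_zero, sub_eq_zero,
      show ∀ h : G, (g = h + k) ↔ (h = g - k) from fun h => by rw [eq_comm, eq_sub_iff_add_eq]]
    rw [Finset.sum_ite_eq' Finset.univ (g - k)]
    simp only [Finset.mem_univ, if_true, sub_add_cancel]
    ring
  simp_rw [key]
  rw [← Finset.mul_sum, Pi.smul_apply, smul_eq_mul]
  have : ∑ k : G, x g * (τ (g - k) * f (Pi.single (g - k) 1))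
      = x g * ∑ k : G, τ (g - k) * f (Pi.single (g - k) 1) := by
    rw [Finset.mul_sum]
  rw [this]
  have reidx : ∑ k : G, τ (g - k) * f (Pi.single (g - k) 1)
      = ∑ h : G, τ h * f (Pi.single h 1) := by
    apply Finset.sum_nbij' (fun k => g - k) (fun h => g - h) <;> simp
  rw [reidx, ← lin_eq_sum]
  ring
end

section
/- If f is a linear functional on ℂ^{o(G)} and τ ∈ ℂ^{o(G)} with f(τ) ≠ 0, then x = (1/(o(G) f(τ))) Σ_{λ∈G×Ĝ} f(π(λ)^{-1}x) π(λ)τ for all x ∈ ℂ^{o(G)}; i.e., the pair ({f(π(λ)^{-1}·)}, {π(λ)τ})_{λ∈G×Ĝ} is a Gabor-Schauder frame for ℂ^{o(G)} up to normalization. -/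
open scoped Classical

lemma sum_addchar_eq_ite {G : Type*} [AddCommGroup G] [Fintype G] (a : G) :
    ∑ ξ : Additive (AddChar G ℂ), (Additive.toMul ξ) a
      = if a = 0 then (Fintype.card G : ℂ) else 0 := by
  classical
  rw [← AddChar.sum_apply_eq_ite]
  exact Fintype.sum_equiv Additive.toMul _ _ (fun _ => rfl)
/-- Inversion formula: if `f(τ) ≠ 0` then
`x = (1/(o(G) f(τ))) Σ_{λ ∈ G×Ĝ} f(π(λ)⁻¹ x) π(λ)τ`, i.e. the full Gabor-Schauder
system is a Gabor-Schauder frame (up to normalization). -/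
theorem full_lattice_gabor_schauder_frame
    (G : Type*) [AddCommGroup G] [Fintype G]
    (f : (G → ℂ) →ₗ[ℂ] ℂ) (τ : G → ℂ) (hfτ : f τ ≠ 0) :
    ∀ x : G → ℂ,
      x = ((Fintype.card G : ℂ) * f τ)⁻¹ •
            ∑ μ : PhaseSpace G, f ((TF μ).symm x) • TF μ τ := by
  intro x
  have hN : (Fintype.card G : ℂ) ≠ 0 := Nat.cast_ne_zero.2 Fintype.card_ne_zero
  set c : G → ℂ := fun h => f (fun j => if h = j then 1 else 0) with hc
  have key : ∑ μ : PhaseSpace G, f ((TF μ).symm x) • TF μ τ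
      = ((Fintype.card G : ℂ) * f τ) • x := by
    funext g
    simp only [Finset.sum_apply, Pi.smul_apply, smul_eq_mul]
    calc ∑ μ : PhaseSpace G, f ((TF μ).symm x) * TF μ τ g
        = ∑ k : G, ∑ ξ : Additive (AddChar G ℂ), ∑ h : G,
            (Additive.toMul ξ) (g - (h + k)) * (x (h + k) * c h * τ (g - k)) := by
          rw [Fintype.sum_prod_type]
          refine Finset.sum_congr rfl fun k _ => Finset.sum_congr rfl fun ξ _ => ?_
          rw [LinearMap.pi_apply_eq_sum_univ f ((TF (k, ξ)).symm x), Finset.sum_mul]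
          refine Finset.sum_congr rfl fun h _ => ?_
          have h1 : ((TF (k, ξ)).symm x) h
              = (Additive.toMul ξ) (-(h + k)) * x (h + k) := rfl
          have h2 : TF (k, ξ) τ g = (Additive.toMul ξ) g * τ (g - k) := rfl
          have h3 : (Additive.toMul ξ) (g - (h + k))
              = (Additive.toMul ξ) (-(h + k)) * (Additive.toMul ξ) g := by
            rw [← AddChar.map_add_eq_mul]
            congr 1
            abel
          rw [h1, h2, h3, smul_eq_mul]
          ring
      _ = ∑ k : G, ∑ h : G,
            (∑ ξ : Additive (AddChar G ℂ), (Additive.toMul ξ) (g - (h + k))) *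
              (x (h + k) * c h * τ (g - k)) := by
          refine Finset.sum_congr rfl fun k _ => ?_
          rw [Finset.sum_comm]
          exact Finset.sum_congr rfl fun h _ => (Finset.sum_mul _ _ _).symm
      _ = ∑ k : G, (Fintype.card G : ℂ) * (x g * c (g - k) * τ (g - k)) := by
          refine Finset.sum_congr rfl fun k _ => ?_
          have : ∀ h : G, (∑ ξ : Additive (AddChar G ℂ), (Additive.toMul ξ) (g - (h + k))) *
              (x (h + k) * c h * τ (g - k))
              = if h = g - k then
                  (Fintype.card G : ℂ) * (x (h + k) * c h * τ (g - k)) else 0 := by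
            intro h
            rw [sum_addchar_eq_ite]
            have hcond : g - (h + k) = 0 ↔ h = g - k := by
              rw [sub_eq_zero, eq_comm, eq_sub_iff_add_eq]
            by_cases hh : h = g - k
            · rw [if_pos (hcond.2 hh), if_pos hh]
            · rw [if_neg (fun h' => hh (hcond.1 h')), if_neg hh, zero_mul]
          rw [Finset.sum_congr rfl fun h _ => this h, Finset.sum_ite_eq' Finset.univ (g - k),
            if_pos (Finset.mem_univ _), sub_add_cancel]
      _ = (Fintype.card G : ℂ) * f τ * x g := by
          rw [← Finset.mul_sum]
          have : ∑ k : G, x g * c (g - k) * τ (g - k) = x g * ∑ k : G, c k * τ k := by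
            rw [Finset.mul_sum]
            exact Fintype.sum_equiv (Equiv.subLeft g) _ _ (fun k => by
              simp [Equiv.subLeft, mul_assoc])
          rw [this, mul_assoc]
          congr 1
          rw [mul_comm (f τ)]
          congr 1
          rw [LinearMap.pi_apply_eq_sum_univ f τ]
          exact Finset.sum_congr rfl fun k _ => by rw [smul_eq_mul, mul_comm]
  rw [key, smul_smul, inv_mul_cancel₀ (mul_ne_zero hN hfτ), one_smul]
end

section
/- Fundamental Identity of Gabor-Schauder frames (Janssen representation): for a subgroup Λ of G×Ĝ, τ ∈ ℂ^{o(G)}, f ∈ (ℂ^{o(G)})*, S_{f,τ,Λ} x = Σ_{λ∈Λ} f(π(λ)^{-1}x) π(λ)τ = (o(Λ)/o(G)) Σ_{μ∈Λ⁰} f(π(μ)^{-1}τ) π(μ)x for all x ∈ ℂ^{o(G)}. -/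
open scoped Classical

/-- The adjoint lattice `Λ⁰` of a subgroup `Λ ⊆ G × Ĝ`: all points whose
time-frequency shift commutes with every `π(λ)`, `λ ∈ Λ`. -/
def adjointLattice {G : Type*} [AddCommGroup G] (Λ : AddSubgroup (PhaseSpace G)) :
    Set (PhaseSpace G) :=
  {μ | ∀ lam ∈ Λ, ∀ x : G → ℂ, TF μ (TF lam x) = TF lam (TF μ x)}

namespace GaborAux

variable {G : Type*} [AddCommGroup G]

lemma TF_apply (μ : PhaseSpace G) (x : G → ℂ) (g : G) :
    TF μ x g = (Additive.toMul μ.2) g * x (g - μ.1) := rfl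

lemma TF_symm_apply (μ : PhaseSpace G) (y : G → ℂ) (g : G) :
    (TF μ).symm y g = (Additive.toMul μ.2) (-(g + μ.1)) * y (g + μ.1) := rfl

/-- The bicharacter `B(λ,μ) = ξ(m) η(-k)` for `λ = (k,ξ)`, `μ = (m,η)`. -/
noncomputable def B (lam μ : PhaseSpace G) : ℂ :=
  (Additive.toMul lam.2) μ.1 * (Additive.toMul μ.2) (-lam.1)

lemma B_add_left (lam lam' μ : PhaseSpace G) : B (lam + lam') μ = B lam μ * B lam' μ := by
  unfold B
  simp only [Prod.fst_add, Prod.snd_add, toMul_add, AddChar.mul_apply, neg_add,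
    AddChar.map_add_eq_mul]
  ring

lemma B_eq_one_iff (lam μ : PhaseSpace G) :
    B lam μ = 1 ↔ (Additive.toMul lam.2) μ.1 = (Additive.toMul μ.2) lam.1 := by
  unfold B
  have h : (Additive.toMul μ.2) lam.1 * (Additive.toMul μ.2) (-lam.1) = 1 := by
    rw [← AddChar.map_add_eq_mul, add_neg_cancel, AddChar.map_zero_eq_one]
  have hne : (Additive.toMul μ.2) lam.1 ≠ 0 := by
    intro h0; rw [h0, zero_mul] at h; exact zero_ne_one h
  rw [AddChar.map_neg_eq_inv, mul_inv_eq_one₀ hne]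

lemma mem_adjoint_iff (Λ : AddSubgroup (PhaseSpace G)) (μ : PhaseSpace G) :
    μ ∈ adjointLattice Λ ↔ ∀ lam ∈ Λ, B lam μ = 1 := by
  constructor
  · intro h lam hlam
    rw [B_eq_one_iff]
    have := congrFun (h lam hlam (fun _ => 1)) 0
    simp only [TF_apply, zero_sub, AddChar.map_zero_eq_one, AddChar.map_neg_eq_inv,
      one_mul, mul_one] at this
    exact inv_injective this
  · intro h lam hlam x
    have hb := (B_eq_one_iff lam μ).mp (h lam hlam)
    funext g
    simp only [TF_apply]
    have h1 : (Additive.toMul lam.2) (g - μ.1)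
        = (Additive.toMul lam.2) g * ((Additive.toMul lam.2) μ.1)⁻¹ := by
      rw [sub_eq_add_neg, AddChar.map_add_eq_mul, AddChar.map_neg_eq_inv]
    have h2 : (Additive.toMul μ.2) (g - lam.1)
        = (Additive.toMul μ.2) g * ((Additive.toMul μ.2) lam.1)⁻¹ := by
      rw [sub_eq_add_neg, AddChar.map_add_eq_mul, AddChar.map_neg_eq_inv]
    have h3 : g - μ.1 - lam.1 = g - lam.1 - μ.1 := by abel
    rw [h1, h2, h3, hb]
    ring

/-- Key computation: `π(λ)⁻¹ π(μ)⁻¹ π(λ) τ = B(λ,μ) • π(μ)⁻¹ τ`. -/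
lemma key (lam μ : PhaseSpace G) (τ : G → ℂ) :
    (TF lam).symm ((TF μ).symm (TF lam τ)) = B lam μ • (TF μ).symm τ := by
  funext g
  simp only [TF_symm_apply, TF_apply, Pi.smul_apply, smul_eq_mul, B]
  have h0 : g + lam.1 + μ.1 - lam.1 = g + μ.1 := by abel
  have h1 : (Additive.toMul lam.2) (-(g + lam.1)) * (Additive.toMul lam.2) (g + lam.1 + μ.1)
      = (Additive.toMul lam.2) μ.1 := by
    rw [← AddChar.map_add_eq_mul, neg_add_cancel_left]
  have h2 : (Additive.toMul μ.2) (-(g + lam.1 + μ.1))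
      = (Additive.toMul μ.2) (-lam.1) * (Additive.toMul μ.2) (-(g + μ.1)) := by
    rw [← AddChar.map_add_eq_mul]; congr 1; abel
  rw [h0, h2]
  linear_combination ((Additive.toMul μ.2) (-lam.1) * (Additive.toMul μ.2) (-(g + μ.1))
    * τ (g + μ.1)) * h1

lemma sum_B (Λ : AddSubgroup (PhaseSpace G)) [Fintype Λ] (μ : PhaseSpace G) :
    ∑ lam : Λ, B (lam : PhaseSpace G) μ
      = if μ ∈ adjointLattice Λ then (Fintype.card Λ : ℂ) else 0 := by
  by_cases hμ : μ ∈ adjointLattice Λ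
  · rw [if_pos hμ]
    rw [Finset.sum_congr rfl (fun lam _ => ((mem_adjoint_iff Λ μ).mp hμ lam.1 lam.2 : _))]
    simp [Finset.card_univ]
  · rw [if_neg hμ]
    rw [mem_adjoint_iff] at hμ
    push_neg at hμ
    obtain ⟨lam₀, hlam₀, hB⟩ := hμ
    set a : Λ := ⟨lam₀, hlam₀⟩
    have hkey : B lam₀ μ * ∑ lam : Λ, B (lam : PhaseSpace G) μ
        = ∑ lam : Λ, B (lam : PhaseSpace G) μ := by
      rw [Finset.mul_sum]
      exact Fintype.sum_equiv (Equiv.addLeft a) _ _ (fun i => by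
        rw [← B_add_left]; rfl)
    by_contra hS
    exact hB (mul_right_cancel₀ hS (by rw [hkey, one_mul]))

variable [Fintype G]

omit [AddCommGroup G] in
lemma single_expand (x : G → ℂ) : x = ∑ h : G, x h • (Pi.single h 1 : G → ℂ) := by
  funext t
  rw [Fintype.sum_apply]
  simp [Pi.single_apply]


/-- Reproducing identity: expansion of an operator in the time-frequency system. -/
lemma expansion (A : (G → ℂ) →ₗ[ℂ] (G → ℂ)) (x : G → ℂ) (g : G) :
    ∑ μ : PhaseSpace G, (∑ h : G, ((TF μ).symm (A (Pi.single h 1))) h) * TF μ x g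
      = (Fintype.card G : ℂ) * A x g := by
  have horth : ∀ t : G, (∑ ψ : Additive (AddChar G ℂ), (Additive.toMul ψ) t)
      = if t = 0 then (Fintype.card G : ℂ) else 0 := fun t => by
    rw [← AddChar.sum_apply_eq_ite]
    exact Fintype.sum_equiv Additive.toMul _ _ (fun ψ => rfl)
  calc ∑ μ : PhaseSpace G, (∑ h : G, ((TF μ).symm (A (Pi.single h 1))) h) * TF μ x g
      = ∑ k : G, ∑ h : G, (A (Pi.single h 1)) (h + k) * x (g - k) *
          ∑ ψ : Additive (AddChar G ℂ), (Additive.toMul ψ) (g - (h + k)) := by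
        rw [Fintype.sum_prod_type]
        refine Finset.sum_congr rfl fun k _ => ?_
        simp only [Finset.sum_mul]
        rw [Finset.sum_comm]
        refine Finset.sum_congr rfl fun h _ => ?_
        rw [Finset.mul_sum]
        refine Finset.sum_congr rfl fun ψ _ => ?_
        simp only [TF_symm_apply, TF_apply]
        have : (Additive.toMul ψ) (g - (h + k))
            = (Additive.toMul ψ) (-(h + k)) * (Additive.toMul ψ) g := by
          rw [← AddChar.map_add_eq_mul, sub_eq_neg_add]
        rw [this]
        ring
    _ = ∑ k : G, ∑ h : G, if h = g - k then
          (A (Pi.single h 1)) (h + k) * x (g - k) * (Fintype.card G : ℂ) else 0 := by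
        refine Finset.sum_congr rfl fun k _ => Finset.sum_congr rfl fun h _ => ?_
        rw [horth]
        have hcond : g - (h + k) = 0 ↔ h = g - k := by
          rw [sub_eq_zero]
          constructor
          · intro hh; rw [hh]; abel
          · intro hh; rw [hh]; abel
        rw [if_congr hcond rfl rfl, mul_ite, mul_zero]
    _ = ∑ k : G, (A (Pi.single (g - k) 1)) g * x (g - k) * (Fintype.card G : ℂ) := by
        refine Finset.sum_congr rfl fun k _ => ?_
        rw [Finset.sum_ite_eq' Finset.univ (g - k)]
        rw [if_pos (Finset.mem_univ _), sub_add_cancel]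
    _ = (Fintype.card G : ℂ) * ∑ h : G, x h * (A (Pi.single h 1)) g := by
        rw [Finset.mul_sum]
        exact Fintype.sum_equiv (Equiv.subLeft g) _ _ (fun k => by
          simp [Equiv.subLeft]; ring)
    _ = (Fintype.card G : ℂ) * A x g := by
        congr 1
        conv_rhs => rw [single_expand x]
        rw [map_sum, Fintype.sum_apply]
        refine Finset.sum_congr rfl fun h _ => ?_
        rw [map_smul]
        simp [smul_eq_mul]

/-- Coefficient of the frame operator in the time-frequency expansion. -/
lemma coeff (Λ : AddSubgroup (PhaseSpace G)) [Fintype Λ] (f : (G → ℂ) →ₗ[ℂ] ℂ)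
    (τ : G → ℂ) (μ : PhaseSpace G) :
    ∑ h : G, ((TF μ).symm ((∑ lam : Λ,
        (f.comp (TF (lam : PhaseSpace G)).symm.toLinearMap).smulRight
          (TF (lam : PhaseSpace G) τ)) (Pi.single h 1))) h
      = (if μ ∈ adjointLattice Λ then (Fintype.card Λ : ℂ) else 0) * f ((TF μ).symm τ) := by
  have step1 : ∀ h : G, ((TF μ).symm ((∑ lam : Λ,
      (f.comp (TF (lam : PhaseSpace G)).symm.toLinearMap).smulRight
        (TF (lam : PhaseSpace G) τ)) (Pi.single h 1))) h
      = ∑ lam : Λ, f ((TF (lam : PhaseSpace G)).symm (Pi.single h 1)) *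
          ((TF μ).symm (TF (lam : PhaseSpace G) τ)) h := by
    intro h
    rw [LinearMap.sum_apply, map_sum, Fintype.sum_apply]
    refine Finset.sum_congr rfl fun lam _ => ?_
    rw [LinearMap.smulRight_apply, map_smul]
    simp
  rw [Finset.sum_congr rfl fun h _ => step1 h, Finset.sum_comm]
  have step2 : ∀ lam : Λ, ∑ h : G, f ((TF (lam : PhaseSpace G)).symm (Pi.single h 1)) *
      ((TF μ).symm (TF (lam : PhaseSpace G) τ)) h
      = B (lam : PhaseSpace G) μ * f ((TF μ).symm τ) := by
    intro lam
    set y : G → ℂ := (TF μ).symm (TF (lam : PhaseSpace G) τ) with hy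
    have : ∑ h : G, f ((TF (lam : PhaseSpace G)).symm (Pi.single h 1)) * y h
        = f ((TF (lam : PhaseSpace G)).symm y) := by
      conv_rhs => rw [single_expand y]
      rw [map_sum, map_sum]
      refine Finset.sum_congr rfl fun h _ => ?_
      rw [map_smul, map_smul, smul_eq_mul, mul_comm]
    rw [this, hy, key, map_smul, smul_eq_mul]
  rw [Finset.sum_congr rfl fun lam _ => step2 lam, ← Finset.sum_mul, sum_B]

end GaborAux

/-- Fundamental identity of Gabor-Schauder frames (Janssen representation):
`S_{f,τ,Λ} x = (o(Λ)/o(G)) Σ_{μ ∈ Λ⁰} f(π(μ)⁻¹ τ) π(μ) x`. -/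
theorem fundamental_identity_of_gabor_schauder_frames
    (G : Type*) [AddCommGroup G] [Fintype G]
    (Λ : AddSubgroup (PhaseSpace G))
    (f : (G → ℂ) →ₗ[ℂ] ℂ) (τ : G → ℂ) :
    ∀ x : G → ℂ,
      ∑ lam : Λ, f ((TF (lam : PhaseSpace G)).symm x) • TF (lam : PhaseSpace G) τ
        = ((Nat.card Λ : ℂ) / (Fintype.card G : ℂ)) •
            ∑ μ ∈ (adjointLattice Λ).toFinset, f ((TF μ).symm τ) • TF μ x := by
  intro x
  set S : (G → ℂ) →ₗ[ℂ] (G → ℂ) := ∑ lam : Λ,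
    (f.comp (TF (lam : PhaseSpace G)).symm.toLinearMap).smulRight
      (TF (lam : PhaseSpace G) τ) with hSdef
  have hLHS : ∑ lam : Λ, f ((TF (lam : PhaseSpace G)).symm x) • TF (lam : PhaseSpace G) τ
      = S x := by
    rw [hSdef, LinearMap.sum_apply]
    refine Finset.sum_congr rfl fun lam _ => ?_
    rw [LinearMap.smulRight_apply]
    simp
  rw [hLHS]
  have hG : (Fintype.card G : ℂ) ≠ 0 := Nat.cast_ne_zero.2 Fintype.card_ne_zero
  funext g
  apply mul_left_cancel₀ hG
  have hexp := GaborAux.expansion S x g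
  rw [← hexp, Finset.sum_congr rfl fun μ _ => by
    rw [GaborAux.coeff Λ f τ μ, ite_mul, zero_mul, ite_mul, zero_mul]]
  have hcollapse : ∀ F : PhaseSpace G → ℂ,
      ∑ μ : PhaseSpace G, (if μ ∈ adjointLattice Λ then F μ else 0)
        = ∑ μ ∈ (adjointLattice Λ).toFinset, F μ := fun F => by
    rw [← Finset.sum_filter]
    congr 1
    ext μ
    simp [Set.mem_toFinset]
  rw [hcollapse]
  simp only [Pi.smul_apply, Finset.sum_apply, smul_eq_mul]
  rw [Nat.card_eq_fintype_card, Finset.mul_sum, Finset.mul_sum]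
  refine Finset.sum_congr rfl fun μ _ => ?_
  field_simp
end

section
/- Schauder-Wexler-Raz criterion: for a subgroup Λ of G×Ĝ, τ ∈ ℂ^{o(G)}, f ∈ (ℂ^{o(G)})*, one has x = Σ_{λ∈Λ} f(π(λ)^{-1}x) π(λ)τ for all x ∈ ℂ^{o(G)} if and only if f(π(μ)^{-1}τ) = (o(G)/o(Λ)) δ_{μ,0} for all μ in the adjoint subgroup Λ⁰. -/
open scoped Classical

namespace SWR

variable {G : Type*} [AddCommGroup G]

lemma char_ne_zero (ψ : AddChar G ℂ) (a : G) : ψ a ≠ 0 := by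
  intro h
  have h1 : ψ a * ψ (-a) = 1 := by
    rw [← AddChar.map_add_eq_mul, add_neg_cancel, AddChar.map_zero_eq_one]
  rw [h, zero_mul] at h1
  exact zero_ne_one h1

lemma TF_apply (μ : PhaseSpace G) (x : G → ℂ) (g : G) :
    TF μ x g = (Additive.toMul μ.2) g * x (g - μ.1) := rfl

lemma TF_symm_apply (μ : PhaseSpace G) (y : G → ℂ) (g : G) :
    (TF μ).symm y g = (Additive.toMul μ.2) (-(g + μ.1)) * y (g + μ.1) := rfl

lemma TF_zero (x : G → ℂ) : TF (0 : PhaseSpace G) x = x := by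
  funext g
  simp [TF_apply]

noncomputable def theta (μ lam : PhaseSpace G) : ℂ :=
  (Additive.toMul μ.2) (-lam.1) * (Additive.toMul lam.2) μ.1

lemma theta_zero_left (lam : PhaseSpace G) : theta (0 : PhaseSpace G) lam = 1 := by
  simp [theta]

lemma theta_add (μ lam lam' : PhaseSpace G) :
    theta μ (lam + lam') = theta μ lam * theta μ lam' := by
  simp only [theta, Prod.fst_add, Prod.snd_add, neg_add, AddChar.map_add_eq_mul, toMul_add,
    AddChar.mul_apply]
  ring

lemma conj_lemma (μ lam : PhaseSpace G) (x : G → ℂ) :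
    (TF lam).symm ((TF μ).symm (TF lam x)) = theta μ lam • (TF μ).symm x := by
  funext g
  simp only [TF_symm_apply, TF_apply, Pi.smul_apply, smul_eq_mul, theta]
  have e1 : g + lam.1 + μ.1 - lam.1 = g + μ.1 := by abel
  have e2 : (-(g + lam.1 + μ.1)) = (-lam.1) + (-(g + μ.1)) := by abel
  have e3 : g + lam.1 + μ.1 = μ.1 + (g + lam.1) := by abel
  rw [e1, e2, e3, AddChar.map_add_eq_mul, AddChar.map_add_eq_mul]
  have h4 : (Additive.toMul lam.2) (-(g + lam.1)) * (Additive.toMul lam.2) (g + lam.1) = 1 := by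
    rw [← AddChar.map_add_eq_mul, neg_add_cancel, AddChar.map_zero_eq_one]
  linear_combination ((Additive.toMul μ.2) (-lam.1) * (Additive.toMul μ.2) (-(g + μ.1)) *
    (Additive.toMul lam.2) μ.1 * x (g + μ.1)) * h4

lemma mem_adjoint_iff (Λ : AddSubgroup (PhaseSpace G)) (μ : PhaseSpace G) :
    μ ∈ adjointLattice Λ ↔ ∀ lam ∈ Λ, theta μ lam = 1 := by
  constructor
  · intro H lam hlam
    have h := congrFun (H lam hlam (fun _ => 1)) (μ.1 + lam.1)
    simp only [TF_apply, mul_one] at h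
    have e1 : μ.1 + lam.1 - μ.1 = lam.1 := by abel
    have e2 : μ.1 + lam.1 - lam.1 = μ.1 := by abel
    rw [e1, e2, AddChar.map_add_eq_mul, AddChar.map_add_eq_mul] at h
    -- h : χμ μ.1 * χμ lam.1 * χlam lam.1 = χlam μ.1 * χlam lam.1 * χμ μ.1
    have hc : (Additive.toMul μ.2) μ.1 * (Additive.toMul lam.2) lam.1 ≠ 0 :=
      mul_ne_zero (char_ne_zero _ _) (char_ne_zero _ _)
    have h5 : (Additive.toMul μ.2) lam.1 = (Additive.toMul lam.2) μ.1 :=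
      mul_left_cancel₀ hc (by linear_combination h)
    unfold theta
    rw [← h5, ← AddChar.map_add_eq_mul, neg_add_cancel, AddChar.map_zero_eq_one]
  · intro H lam hlam x
    funext g
    simp only [TF_apply]
    have e1 : g - μ.1 - lam.1 = g - lam.1 - μ.1 := by abel
    rw [e1]
    have ht := H lam hlam
    unfold theta at ht
    have e2 : g - μ.1 = g + (-μ.1) := by abel
    have e3 : g - lam.1 = g + (-lam.1) := by abel
    rw [e2, e3, AddChar.map_add_eq_mul, AddChar.map_add_eq_mul]
    have h5 : (Additive.toMul lam.2) (-μ.1) = (Additive.toMul μ.2) (-lam.1) := by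
      have hc : (Additive.toMul lam.2) μ.1 ≠ 0 := char_ne_zero _ _
      have h6 : (Additive.toMul lam.2) (-μ.1) * (Additive.toMul lam.2) μ.1 = 1 := by
        rw [← AddChar.map_add_eq_mul, neg_add_cancel, AddChar.map_zero_eq_one]
      exact mul_right_cancel₀ hc (by rw [h6, ht])
    rw [h5]
    ring

end SWR

section Fin
variable {G : Type*} [AddCommGroup G] [Fintype G]

open SWR

lemma SWR.sum_theta_eq_zero (Λ : AddSubgroup (PhaseSpace G)) (μ : PhaseSpace G)
    (h : μ ∉ adjointLattice Λ) :
    ∑ lam : Λ, theta μ (lam : PhaseSpace G) = 0 := by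
  rw [mem_adjoint_iff] at h
  push_neg at h
  obtain ⟨lam₀, hlam₀, hθ⟩ := h
  set s := ∑ lam : Λ, theta μ (lam : PhaseSpace G) with hs
  have key : theta μ lam₀ * s = s := by
    rw [hs, Finset.mul_sum]
    exact Fintype.sum_equiv (Equiv.addLeft (⟨lam₀, hlam₀⟩ : Λ)) _ _ (fun lam => by
      simp only [Equiv.coe_addLeft, AddSubgroup.coe_add, theta_add])
  have : (theta μ lam₀ - 1) * s = 0 := by ring_nf; linear_combination key
  rcases mul_eq_zero.1 this with h1 | h2
  · exact absurd (by linear_combination h1) hθ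
  · exact h2

lemma SWR.trace_single (lam' : PhaseSpace G) (f : (G → ℂ) →ₗ[ℂ] ℂ) (w : G → ℂ) :
    ∑ g : G, f ((TF lam').symm (Pi.single g 1)) * w g = f ((TF lam').symm w) := by
  have hw : w = ∑ g : G, w g • (Pi.single g 1 : G → ℂ) := by
    funext h
    simp [Pi.single_apply]
  conv_rhs => rw [hw]
  rw [map_sum, map_sum]
  exact Finset.sum_congr rfl (fun g _ => by rw [map_smul, map_smul]; simp [mul_comm])

lemma SWR.trace_S (Λ : AddSubgroup (PhaseSpace G)) (f : (G → ℂ) →ₗ[ℂ] ℂ) (τ : G → ℂ)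
    (μ : PhaseSpace G) :
    ∑ g : G, ((TF μ).symm (∑ lam : Λ,
        f ((TF (lam : PhaseSpace G)).symm (Pi.single g 1)) • TF (lam : PhaseSpace G) τ)) g
      = (∑ lam : Λ, theta μ (lam : PhaseSpace G)) * f ((TF μ).symm τ) := by
  have step1 : ∀ g : G, ((TF μ).symm (∑ lam : Λ,
        f ((TF (lam : PhaseSpace G)).symm (Pi.single g 1)) • TF (lam : PhaseSpace G) τ)) g
      = ∑ lam : Λ, f ((TF (lam : PhaseSpace G)).symm (Pi.single g 1)) *
          ((TF μ).symm (TF (lam : PhaseSpace G) τ)) g := by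
    intro g
    rw [map_sum]
    simp only [map_smul, Finset.sum_apply, Pi.smul_apply, smul_eq_mul]
  simp only [step1]
  rw [Finset.sum_comm]
  rw [Finset.sum_mul]
  refine Finset.sum_congr rfl (fun lam _ => ?_)
  rw [SWR.trace_single (lam : PhaseSpace G) f ((TF μ).symm (TF (lam : PhaseSpace G) τ)),
    conj_lemma, map_smul, smul_eq_mul, mul_comm]

lemma SWR.trace_id (μ : PhaseSpace G) :
    ∑ g : G, ((TF μ).symm (Pi.single g 1)) g
      = if μ = 0 then (Fintype.card G : ℂ) else 0 := by
  simp only [TF_symm_apply]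
  by_cases hu : μ.1 = 0
  · have h1 : ∀ g : G, (Pi.single g 1 : G → ℂ) (g + μ.1) = 1 := by
      intro g; rw [hu, add_zero]; simp
    simp only [h1, mul_one]
    have h2 : ∑ g : G, (Additive.toMul μ.2) (-(g + μ.1)) = ∑ g : G, (Additive.toMul μ.2) g := by
      apply Fintype.sum_equiv (Equiv.trans (Equiv.addRight μ.1) (Equiv.neg G))
      intro g; rfl
    rw [h2, AddChar.sum_eq_ite]
    have h3 : μ = 0 ↔ Additive.toMul μ.2 = (0 : AddChar G ℂ) := by
      constructor
      · rintro rfl; rfl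
      · intro h
        have : μ.2 = 0 := by
          apply Additive.toMul.injective
          exact h
        exact Prod.ext hu this
    simp [h3]
  · have h1 : ∀ g : G, (Pi.single g 1 : G → ℂ) (g + μ.1) = 0 := by
      intro g
      rw [Pi.single_apply, if_neg]
      intro h
      exact hu (by rwa [add_eq_left] at h)
    have hμ : μ ≠ 0 := fun h => hu (by rw [h]; rfl)
    simp [h1, hμ]

lemma SWR.inversion (A : (G → ℂ) →ₗ[ℂ] (G → ℂ)) (y : G → ℂ) :
    ∑ μ : PhaseSpace G, (∑ g : G, ((TF μ).symm (A (Pi.single g 1))) g) • TF μ y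
      = (Fintype.card G : ℂ) • A y := by
  funext h
  have expand : ∀ z : G → ℂ, A z h = ∑ g : G, (A (Pi.single g 1 : G → ℂ)) h * z g := by
    intro z
    have hz : z = ∑ g : G, z g • (Pi.single g 1 : G → ℂ) := by
      funext t; simp [Pi.single_apply]
    conv_lhs => rw [hz]
    rw [map_sum, Finset.sum_apply]
    exact Finset.sum_congr rfl (fun g _ => by simp [mul_comm])
  have char_sum : ∀ a : G, ∑ η : Additive (AddChar G ℂ), (Additive.toMul η) a
      = if a = 0 then (Fintype.card G : ℂ) else 0 := by
    intro a
    rw [Fintype.sum_equiv (Additive.toMul (α := AddChar G ℂ))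
      (fun η => (Additive.toMul η) a) (fun ψ => ψ a) (fun η => rfl)]
    exact AddChar.sum_apply_eq_ite a
  rw [Finset.sum_apply]
  simp only [Pi.smul_apply, smul_eq_mul]
  rw [Fintype.sum_prod_type]
  have key : ∀ l : G, (∑ η : Additive (AddChar G ℂ),
      (∑ g : G, ((TF ((l, η) : PhaseSpace G)).symm (A (Pi.single g 1 : G → ℂ))) g) *
        (TF ((l, η) : PhaseSpace G) y h))
      = (Fintype.card G : ℂ) * ((A (Pi.single (h - l) 1 : G → ℂ)) h * y (h - l)) := by
    intro l
    simp only [TF_symm_apply, TF_apply]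
    have step : ∀ η : Additive (AddChar G ℂ),
        (∑ g : G, (Additive.toMul η) (-(g + l)) * (A (Pi.single g 1 : G → ℂ)) (g + l)) *
          ((Additive.toMul η) h * y (h - l))
        = ∑ g : G, (Additive.toMul η) (-(g + l) + h) *
            ((A (Pi.single g 1 : G → ℂ)) (g + l) * y (h - l)) := by
      intro η
      rw [Finset.sum_mul]
      exact Finset.sum_congr rfl (fun g _ => by rw [AddChar.map_add_eq_mul]; ring)
    simp only [step]
    rw [Finset.sum_comm]
    have inner : ∀ g : G, (∑ η : Additive (AddChar G ℂ), (Additive.toMul η) (-(g + l) + h) *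
          ((A (Pi.single g 1 : G → ℂ)) (g + l) * y (h - l)))
        = (if g = h - l then (Fintype.card G : ℂ) else 0) *
            ((A (Pi.single g 1 : G → ℂ)) (g + l) * y (h - l)) := by
      intro g
      rw [← Finset.sum_mul, char_sum]
      congr 1
      have : (-(g + l) + h = 0) ↔ (g = h - l) := by
        rw [neg_add_eq_zero, ← eq_sub_iff_add_eq]
      exact if_congr this rfl rfl
    simp only [inner]
    simp only [ite_mul, zero_mul]
    rw [Finset.sum_ite_eq' Finset.univ (h - l)
      (fun g => (Fintype.card G : ℂ) * ((A (Pi.single g 1 : G → ℂ)) (g + l) * y (h - l)))]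
    rw [if_pos (Finset.mem_univ _), sub_add_cancel]
  simp only [key]
  rw [← Finset.mul_sum]
  rw [Fintype.sum_equiv (Equiv.subLeft h)
    (fun l => (A (Pi.single (h - l) 1 : G → ℂ)) h * y (h - l))
    (fun g => (A (Pi.single g 1 : G → ℂ)) h * y g) (fun l => rfl)]
  rw [← expand y]

end Fin

open SWR

/-- Schauder–Wexler–Raz criterion: `x = Σ_{λ ∈ Λ} f(π(λ)⁻¹ x) π(λ)τ` for all `x`
iff `f(π(μ)⁻¹ τ) = (o(G)/o(Λ)) δ_{μ,0}` for all `μ` in the adjoint lattice `Λ⁰`. -/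
theorem schauder_wexler_raz_criterion
    (G : Type*) [AddCommGroup G] [Fintype G]
    (Λ : AddSubgroup (PhaseSpace G))
    (f : (G → ℂ) →ₗ[ℂ] ℂ) (τ : G → ℂ) :
    (∀ x : G → ℂ,
        ∑ lam : Λ, f ((TF (lam : PhaseSpace G)).symm x) • TF (lam : PhaseSpace G) τ = x)
      ↔ ∀ μ ∈ adjointLattice Λ,
          f ((TF μ).symm τ)
            = if μ = 0 then (Fintype.card G : ℂ) / (Nat.card Λ : ℂ) else 0 := by
  haveI : Nonempty ↥Λ := ⟨⟨0, Λ.zero_mem⟩⟩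
  have hcardΛ : ((Fintype.card ↥Λ : ℕ) : ℂ) ≠ 0 := Nat.cast_ne_zero.2 Fintype.card_ne_zero
  have hcardG : ((Fintype.card G : ℕ) : ℂ) ≠ 0 := Nat.cast_ne_zero.2 Fintype.card_ne_zero
  have hnat : (Nat.card ↥Λ : ℂ) = (Fintype.card ↥Λ : ℂ) := by rw [Nat.card_eq_fintype_card]
  constructor
  · intro H μ hμ
    have t1 := SWR.trace_S Λ f τ μ
    have t2 : ∑ g : G, ((TF μ).symm (∑ lam : Λ,
        f ((TF (lam : PhaseSpace G)).symm (Pi.single g 1)) • TF (lam : PhaseSpace G) τ)) g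
        = ∑ g : G, ((TF μ).symm ((Pi.single g 1 : G → ℂ))) g := by
      refine Finset.sum_congr rfl fun g _ => ?_
      rw [H (Pi.single g 1)]
    rw [t2, SWR.trace_id] at t1
    have hθ : ∀ lam : ↥Λ, theta μ (lam : PhaseSpace G) = 1 :=
      fun lam => (mem_adjoint_iff Λ μ).1 hμ lam lam.2
    have hsum : (∑ lam : ↥Λ, theta μ (lam : PhaseSpace G)) = (Fintype.card ↥Λ : ℂ) := by
      simp [hθ]
    rw [hsum] at t1
    rw [hnat]
    split_ifs with h0
    · rw [if_pos h0] at t1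
      field_simp
      linear_combination -t1
    · rw [if_neg h0] at t1
      exact (mul_eq_zero.1 t1.symm).resolve_left hcardΛ
  · intro C x
    set Slin : (G → ℂ) →ₗ[ℂ] (G → ℂ) :=
      { toFun := fun y => ∑ lam : Λ, f ((TF (lam : PhaseSpace G)).symm y) •
          TF (lam : PhaseSpace G) τ
        map_add' := by
          intro a b
          rw [← Finset.sum_add_distrib]
          exact Finset.sum_congr rfl fun lam _ => by rw [map_add, map_add, add_smul]
        map_smul' := by
          intro c a
          rw [RingHom.id_apply, Finset.smul_sum]
          exact Finset.sum_congr rfl fun lam _ => by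
            rw [map_smul, map_smul, smul_eq_mul, mul_smul] } with hSlin
    have hinv := SWR.inversion Slin x
    have coeff : ∀ μ : PhaseSpace G, (∑ g : G, ((TF μ).symm (Slin (Pi.single g 1))) g)
        = (∑ lam : Λ, theta μ (lam : PhaseSpace G)) * f ((TF μ).symm τ) :=
      fun μ => SWR.trace_S Λ f τ μ
    have h0mem : (0 : PhaseSpace G) ∈ adjointLattice Λ :=
      (mem_adjoint_iff Λ 0).2 (fun lam _ => theta_zero_left lam)
    have hmain : ∑ μ : PhaseSpace G,
        (∑ g : G, ((TF μ).symm (Slin (Pi.single g 1))) g) • TF μ x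
        = (Fintype.card G : ℂ) • x := by
      rw [Finset.sum_eq_single_of_mem (0 : PhaseSpace G) (Finset.mem_univ _)]
      · rw [coeff 0]
        have hs0 : (∑ lam : Λ, theta (0 : PhaseSpace G) (lam : PhaseSpace G))
            = (Fintype.card ↥Λ : ℂ) := by simp [theta_zero_left]
        rw [hs0, C 0 h0mem, if_pos rfl, TF_zero, hnat]
        rw [show (Fintype.card ↥Λ : ℂ) * ((Fintype.card G : ℂ) / (Fintype.card ↥Λ : ℂ))
          = (Fintype.card G : ℂ) from by field_simp]
      · intro μ _ hμ0
        rw [coeff μ]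
        by_cases hμ : μ ∈ adjointLattice Λ
        · rw [C μ hμ, if_neg hμ0, mul_zero, zero_smul]
        · rw [SWR.sum_theta_eq_zero Λ μ hμ, zero_mul, zero_smul]
    rw [hmain] at hinv
    have := smul_right_injective (G → ℂ) hcardG hinv.symm
    exact this
end

section
/- Partial Schauder Ron-Shen duality: if ({f(π(λ)^{-1}·)}_{λ∈Λ}, {π(λ)τ}_{λ∈Λ}) is a Gabor-Schauder frame for ℂ^{o(G)} (i.e., the frame operator S_{f,τ,Λ} is invertible), then both the family of vectors {π(μ)^{-1}τ}_{μ∈Λ⁰} and the family of functionals {f ∘ π(μ)^{-1}}_{μ∈Λ⁰} are linearly independent. -/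
open scoped Classical

/-- Linear independence of the inverse time-frequency shifts as linear maps. -/
lemma TF_symm_linearIndependent (G : Type*) [AddCommGroup G] [Finite G] :
    LinearIndependent ℂ (fun μ : PhaseSpace G =>
      ((TF μ).symm : (G → ℂ) →ₗ[ℂ] (G → ℂ))) := by
  rw [linearIndependent_iff']
  intro s c h μ₀ hμ₀
  -- evaluate the operator identity on delta functions
  have key : ∀ g : G, ∑ μ ∈ s.filter (fun μ => μ.1 = μ₀.1),
      c μ * (Additive.toMul μ.2) (-(g + μ₀.1)) = 0 := by
    intro g
    have h1 := congrFun (congrArg (fun (L : (G → ℂ) →ₗ[ℂ] (G → ℂ)) =>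
      L (Pi.single (g + μ₀.1) (1 : ℂ))) h) g
    simp only [LinearMap.coe_sum, Finset.sum_apply, LinearMap.smul_apply, Pi.smul_apply,
      LinearMap.zero_apply, Pi.zero_apply, smul_eq_mul, LinearEquiv.coe_coe] at h1
    rw [← h1]
    rw [Finset.sum_filter]
    refine Finset.sum_congr rfl fun μ hμ => ?_
    have : (TF μ).symm (Pi.single (g + μ₀.1) (1 : ℂ)) g
        = (Additive.toMul μ.2) (-(g + μ.1)) * (Pi.single (g + μ₀.1) (1 : ℂ) : G → ℂ) (g + μ.1) := rfl
    rw [this]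
    by_cases hk : μ.1 = μ₀.1
    · simp [hk, Pi.single_apply]
    · have : g + μ.1 ≠ g + μ₀.1 := fun hc => hk (by exact add_left_cancel hc)
      simp [hk, Pi.single_apply, this]
  -- turn into a statement about characters
  set t := s.filter (fun μ => μ.1 = μ₀.1) with ht
  have key2 : ∀ h : G, ∑ μ ∈ t, c μ * (Additive.toMul μ.2) h = 0 := by
    intro h
    have := key (-h - μ₀.1)
    simpa [neg_sub, sub_add_cancel, neg_add_rev] using this
  have hinj : Set.InjOn (fun μ : PhaseSpace G => (Additive.toMul μ.2 : AddChar G ℂ)) t := by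
    intro μ hμ ν hν hc
    have h1 : μ.1 = μ₀.1 := (Finset.mem_filter.mp hμ).2
    have h2 : ν.1 = μ₀.1 := (Finset.mem_filter.mp hν).2
    have : μ.2 = ν.2 := Additive.toMul.injective hc
    exact Prod.ext (h1.trans h2.symm) this
  have hchar := linearIndependent_iff'.mp (AddChar.linearIndependent G ℂ)
    (t.image (fun μ => (Additive.toMul μ.2 : AddChar G ℂ)))
    (fun ψ => c (μ₀.1, Additive.ofMul ψ))
  have hsum0 : ∑ ψ ∈ t.image (fun μ => (Additive.toMul μ.2 : AddChar G ℂ)),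
      c (μ₀.1, Additive.ofMul ψ) • (ψ : G → ℂ) = 0 := by
    rw [Finset.sum_image hinj]
    funext h
    simp only [Finset.sum_apply, Pi.smul_apply, smul_eq_mul, Pi.zero_apply]
    rw [← key2 h]
    refine Finset.sum_congr rfl fun μ hμ => ?_
    have h1 : μ.1 = μ₀.1 := (Finset.mem_filter.mp hμ).2
    congr 1
    exact congrArg c (Prod.ext h1.symm rfl)
  have hμ₀t : μ₀ ∈ t := Finset.mem_filter.mpr ⟨hμ₀, rfl⟩
  have := hchar hsum0 (Additive.toMul μ₀.2)
    (Finset.mem_image.mpr ⟨μ₀, hμ₀t, rfl⟩)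
  simpa using this

lemma comm_symm_fwd {G : Type*} [AddCommGroup G] {Λ : AddSubgroup (PhaseSpace G)}
    {μ : PhaseSpace G} (hμ : μ ∈ adjointLattice Λ) {lam : PhaseSpace G} (hlam : lam ∈ Λ)
    (y : G → ℂ) : (TF μ).symm (TF lam y) = TF lam ((TF μ).symm y) := by
  apply (TF μ).injective
  rw [LinearEquiv.apply_symm_apply, hμ lam hlam, LinearEquiv.apply_symm_apply]

lemma comm_symm_symm {G : Type*} [AddCommGroup G] {Λ : AddSubgroup (PhaseSpace G)}
    {μ : PhaseSpace G} (hμ : μ ∈ adjointLattice Λ) {lam : PhaseSpace G} (hlam : lam ∈ Λ)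
    (y : G → ℂ) : (TF μ).symm ((TF lam).symm y) = (TF lam).symm ((TF μ).symm y) := by
  apply (TF lam).injective
  rw [← comm_symm_fwd hμ hlam, LinearEquiv.apply_symm_apply, LinearEquiv.apply_symm_apply]

/-- Partial Schauder Ron–Shen duality: if the Gabor-Schauder frame operator
`S_{f,τ,Λ}` is invertible, then both `{π(μ)⁻¹ τ}_{μ ∈ Λ⁰}` and
`{f ∘ π(μ)⁻¹}_{μ ∈ Λ⁰}` are linearly independent. -/
theorem partial_schauder_ron_shen_duality
    (G : Type*) [AddCommGroup G] [Fintype G]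
    (Λ : AddSubgroup (PhaseSpace G))
    (f : (G → ℂ) →ₗ[ℂ] ℂ) (τ : G → ℂ)
    (hframe : Function.Bijective (fun x : G → ℂ =>
      ∑ lam : Λ, f ((TF (lam : PhaseSpace G)).symm x) • TF (lam : PhaseSpace G) τ)) :
    LinearIndependent ℂ
      (fun μ : adjointLattice Λ => (TF (μ : PhaseSpace G)).symm τ) ∧
    LinearIndependent ℂ
      (fun μ : adjointLattice Λ =>
        f ∘ₗ ((TF (μ : PhaseSpace G)).symm : (G → ℂ) →ₗ[ℂ] (G → ℂ))) := by
  obtain ⟨hinj, hsurj⟩ := hframe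
  have li := (TF_symm_linearIndependent G).comp
    (fun μ : adjointLattice Λ => (μ : PhaseSpace G)) Subtype.val_injective
  constructor
  · rw [linearIndependent_iff']
    intro s c hsum μ₀ hμ₀
    set T : (G → ℂ) →ₗ[ℂ] (G → ℂ) :=
      ∑ μ ∈ s, c μ • ((TF (μ : PhaseSpace G)).symm : (G → ℂ) →ₗ[ℂ] (G → ℂ)) with hT
    have hTlam : ∀ lam : Λ, T (TF (lam : PhaseSpace G) τ) = 0 := by
      intro lam
      rw [hT]
      simp only [LinearMap.coe_sum, Finset.sum_apply, LinearMap.smul_apply,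
        LinearEquiv.coe_coe]
      calc ∑ μ ∈ s, c μ • (TF (μ : PhaseSpace G)).symm (TF (lam : PhaseSpace G) τ)
          = ∑ μ ∈ s, c μ • TF (lam : PhaseSpace G) ((TF (μ : PhaseSpace G)).symm τ) := by
            refine Finset.sum_congr rfl fun μ _ => ?_
            rw [comm_symm_fwd μ.2 lam.2]
        _ = TF (lam : PhaseSpace G) (∑ μ ∈ s, c μ • (TF (μ : PhaseSpace G)).symm τ) := by
            rw [map_sum]
            exact Finset.sum_congr rfl fun μ _ => (map_smul _ _ _).symm
        _ = 0 := by rw [hsum]; exact map_zero _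
    have hT0 : T = 0 := by
      apply LinearMap.ext; intro y
      obtain ⟨x, hx⟩ := hsurj y
      rw [LinearMap.zero_apply, ← hx]
      simp only
      rw [map_sum]
      simp only [map_smul, hTlam, smul_zero, Finset.sum_const_zero]
    exact linearIndependent_iff'.mp li s c hT0 μ₀ hμ₀
  · rw [linearIndependent_iff']
    intro s c hsum μ₀ hμ₀
    set T : (G → ℂ) →ₗ[ℂ] (G → ℂ) :=
      ∑ μ ∈ s, c μ • ((TF (μ : PhaseSpace G)).symm : (G → ℂ) →ₗ[ℂ] (G → ℂ)) with hT
    have hfT : ∀ z : G → ℂ, ∀ lam : Λ, f ((TF (lam : PhaseSpace G)).symm (T z)) = 0 := by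
      intro z lam
      have h1 : (TF (lam : PhaseSpace G)).symm (T z)
          = ∑ μ ∈ s, c μ • (TF (μ : PhaseSpace G)).symm ((TF (lam : PhaseSpace G)).symm z) := by
        rw [hT]
        simp only [LinearMap.coe_sum, Finset.sum_apply, LinearMap.smul_apply,
          LinearEquiv.coe_coe, map_sum, map_smul]
        exact Finset.sum_congr rfl fun μ _ => by rw [comm_symm_symm μ.2 lam.2]
      rw [h1, map_sum]
      have := congrFun (congrArg (fun (L : (G → ℂ) →ₗ[ℂ] ℂ) => L.toFun) hsum)
        ((TF (lam : PhaseSpace G)).symm z)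
      simpa [map_smul, smul_eq_mul] using this
    have hT0 : T = 0 := by
      apply LinearMap.ext; intro x
      rw [LinearMap.zero_apply]
      apply hinj
      simp only [hfT, zero_smul, Finset.sum_const_zero, map_zero, LinearMap.map_zero]
    exact linearIndependent_iff'.mp li s c hT0 μ₀ hμ₀
end
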